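/- arXiv:2301.04142 — 2 statements merged into one kernel-verified Lean document; each statement's English description precedes it below -/
import Mathlib

section
/- (Appendix B, Lemma: the minimum single-cell generalized CFL limit is at most the region's generalized CFL limit.) For the concrete 3-D FDTD-Q region, set Σc := (8/(ℏ*Δx*Δy*Δz)) • Hc for each cell c. Let Δt > 0 be such that for every cell c and every eigenvalue ν ∈ spectrum ℝ Σc, Δt * |ν| < 2. Then for every eigenvalue μ ∈ spectrum ℝ Σ, Δt * |μ| < 2. Equivalently, the minimum over all cells c of the single-cell generalized CFL limit 2/ρ(Σc) is at most the region's generalized CFL limit 2/ρ(Σ). -/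
open Matrix Kronecker

noncomputable section

abbrev Node (nx ny nz : ℕ) := Fin (nz+1) × Fin (ny+1) × Fin (nx+1)

/-- Triple Kronecker product with indices identified with `α × β × γ`. -/
def kron3 {α β γ : Type*} (A : Matrix α α ℝ) (B : Matrix β β ℝ) (C : Matrix γ γ ℝ) :
    Matrix (α × β × γ) (α × β × γ) ℝ :=
  Matrix.reindex (Equiv.prodAssoc α β γ) (Equiv.prodAssoc α β γ) (A ⊗ₖ B ⊗ₖ C)

/-- 1-D finite-difference matrix `W p`: `-1` at `j = castSucc i`, `+1` at `j = succ i`. -/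
def Wmat (p : ℕ) : Matrix (Fin p) (Fin (p+1)) ℝ :=
  Matrix.of fun i j => if j = Fin.castSucc i then (-1 : ℝ) else if j = Fin.succ i then 1 else 0

/-- 1-D stiffness matrix `A p = (W p)ᵀ * W p`. -/
def Amat (p : ℕ) : Matrix (Fin (p+1)) (Fin (p+1)) ℝ := (Wmat p)ᵀ * Wmat p

/-- Diagonal matrix with first and last entries `1/2`, all others `1`. -/
def Itl (p : ℕ) : Matrix (Fin (p+1)) (Fin (p+1)) ℝ :=
  Matrix.diagonal (fun i => if i = 0 ∨ i = Fin.last p then (1:ℝ)/2 else 1)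

/-- Secondary-cell volume matrix `V''`. -/
def Vsec (nx ny nz : ℕ) (Δx Δy Δz : ℝ) : Matrix (Node nx ny nz) (Node nx ny nz) ℝ :=
  Matrix.diagonal (fun p =>
    Δx * Δy * Δz * Itl nz p.1 p.1 * Itl ny p.2.1 p.2.1 * Itl nx p.2.2 p.2.2)

/-- The FDTD-Q Hamiltonian matrix `H`. -/
def Hmat (nx ny nz : ℕ) (ℏ m Δx Δy Δz : ℝ) (U : Node nx ny nz → ℝ) :
    Matrix (Node nx ny nz) (Node nx ny nz) ℝ :=
  (ℏ^2/(2*m)) • ((Δy*Δz/Δx) • kron3 (Itl nz) (Itl ny) (Amat nx)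
    + (Δx*Δz/Δy) • kron3 (Itl nz) (Amat ny) (Itl nx)
    + (Δx*Δy/Δz) • kron3 (Amat nz) (Itl ny) (Itl nx))
  + Vsec nx ny nz Δx Δy Δz * Matrix.diagonal U

/-- Diagonal matrix of reciprocal square roots of the diagonal of `V''`. -/
def Dmat (nx ny nz : ℕ) (Δx Δy Δz : ℝ) : Matrix (Node nx ny nz) (Node nx ny nz) ℝ :=
  Matrix.diagonal (fun p => 1 / Real.sqrt (Vsec nx ny nz Δx Δy Δz p p))

/-- The scaled Hamiltonian `Σ = (1/ℏ) • (D * H * D)`. -/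
def Sgm (nx ny nz : ℕ) (ℏ m Δx Δy Δz : ℝ) (U : Node nx ny nz → ℝ) :
    Matrix (Node nx ny nz) (Node nx ny nz) ℝ :=
  (1/ℏ) • (Dmat nx ny nz Δx Δy Δz * Hmat nx ny nz ℏ m Δx Δy Δz U * Dmat nx ny nz Δx Δy Δz)


/-- The corner node index `k + κ` inside `Fin (p+1)`. -/
def cornerIdx {p : ℕ} (k : Fin p) (κ : Fin 2) : Fin (p+1) :=
  ⟨k.val + κ.val, by have h1 := k.isLt; have h2 := κ.isLt; omega⟩

/-- Restriction of a nodal function to the 8 corners of the primary cell `c`. -/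
def restr {nx ny nz : ℕ} (c : Fin nz × Fin ny × Fin nx) (ψ : Node nx ny nz → ℝ) :
    Fin 2 × Fin 2 × Fin 2 → ℝ :=
  fun q => ψ (cornerIdx c.1 q.1, cornerIdx c.2.1 q.2.1, cornerIdx c.2.2 q.2.2)

/-- The 1-D single-cell stiffness matrix `Ŵ = W₁ᵀW₁`. -/
def What : Matrix (Fin 2) (Fin 2) ℝ := !![1, -1; -1, 1]

/-- The single-cell FDTD-Q Hamiltonian of the primary cell `c`. -/
def Hcell (nx ny nz : ℕ) (ℏ m Δx Δy Δz : ℝ) (U : Node nx ny nz → ℝ)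
    (c : Fin nz × Fin ny × Fin nx) :
    Matrix (Fin 2 × Fin 2 × Fin 2) (Fin 2 × Fin 2 × Fin 2) ℝ :=
  (ℏ^2/(2*m)) • ((Δy*Δz/(4*Δx)) • kron3 (1 : Matrix (Fin 2) (Fin 2) ℝ)
        (1 : Matrix (Fin 2) (Fin 2) ℝ) What
    + (Δx*Δz/(4*Δy)) • kron3 (1 : Matrix (Fin 2) (Fin 2) ℝ) What
        (1 : Matrix (Fin 2) (Fin 2) ℝ)
    + (Δx*Δy/(4*Δz)) • kron3 What (1 : Matrix (Fin 2) (Fin 2) ℝ)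
        (1 : Matrix (Fin 2) (Fin 2) ℝ))
  + (Δx*Δy*Δz/8) • Matrix.diagonal (restr c U)

/-- The single-cell volume matrix. -/
def Vcell (Δx Δy Δz : ℝ) :
    Matrix (Fin 2 × Fin 2 × Fin 2) (Fin 2 × Fin 2 × Fin 2) ℝ :=
  (Δx*Δy*Δz/8) • (1 : Matrix (Fin 2 × Fin 2 × Fin 2) (Fin 2 × Fin 2 × Fin 2) ℝ)

/-! The region Hamiltonian and the secondary-cell volume matrix are both assembled from cell
contributions, `H = ∑_c R_cᵀ H_c R_c` and `V'' = ∑_c R_cᵀ V_c R_c`, where `R_c` restricts a nodal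
vector to the eight corners of `c`; a node lies in `8` cells, halved once per boundary direction,
which is where the weights of `Ĩ` come from. The cell CFL hypothesis bounds every cell spectrum by
some `r` with `Δt * r < 2`, i.e. `|wᵀ H_c w| / ℏ ≤ r * wᵀ V_c w`. Summing over cells gives
`|ψᵀ H ψ| / ℏ ≤ r * ψᵀ V'' ψ`, and with `ψ = D x` this bounds the Rayleigh quotient of `Σ`, hence
each of its eigenvalues, by `r`. -/

namespace Matrix

variable {α m n ι : Type*}

theorem dotProduct_transpose_mul_mul_mulVec [Fintype m] [Fintype n] [CommSemiring α]
    (R : Matrix m n α) (M : Matrix m m α) (x : n → α) :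
    x ⬝ᵥ ((Rᵀ * M * R) *ᵥ x) = (R *ᵥ x) ⬝ᵥ (M *ᵥ (R *ᵥ x)) := by
  rw [← mulVec_mulVec, ← mulVec_mulVec, dotProduct_mulVec, vecMul_transpose]

theorem posSemidef_algebraMap_sub [Fintype m] [DecidableEq m] {A : Matrix m m ℝ}
    (hA : A.IsHermitian) {r : ℝ} (hr : ∀ ν ∈ spectrum ℝ A, ν ≤ r) :
    (algebraMap ℝ (Matrix m m ℝ) r - A).PosSemidef := by
  refine posSemidef_iff_isHermitian_and_spectrum_nonneg.mpr ⟨(isHermitian_diagonal _).sub hA, ?_⟩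
  rw [← spectrum.singleton_sub_eq]
  rintro _ ⟨_, rfl, ν, hν, rfl⟩
  exact sub_nonneg.mpr (hr ν hν)

theorem dotProduct_mulVec_le_of_spectrum_le [Fintype m] [DecidableEq m] {A : Matrix m m ℝ}
    (hA : A.IsHermitian) {r : ℝ} (hr : ∀ ν ∈ spectrum ℝ A, ν ≤ r) (x : m → ℝ) :
    x ⬝ᵥ (A *ᵥ x) ≤ r * (x ⬝ᵥ x) := by
  have := (posSemidef_algebraMap_sub hA hr).dotProduct_mulVec_nonneg x
  rwa [star_trivial, sub_mulVec, dotProduct_sub, Algebra.algebraMap_eq_smul_one, smul_mulVec,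
    one_mulVec, dotProduct_smul, smul_eq_mul, sub_nonneg] at this

def FormBound [Fintype n] (r : ℝ) (A B : Matrix n n ℝ) : Prop :=
  ∀ x : n → ℝ, |x ⬝ᵥ (A *ᵥ x)| ≤ r * (x ⬝ᵥ (B *ᵥ x))

namespace FormBound

variable [Fintype m] [Fintype n] {r : ℝ} {A B : Matrix m m ℝ}

theorem conj (h : FormBound r A B) (R : Matrix m n ℝ) :
    FormBound r (Rᵀ * A * R) (Rᵀ * B * R) :=
  fun x => by simpa only [dotProduct_transpose_mul_mul_mulVec] using h (R *ᵥ x)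

theorem sum [Fintype ι] {A B : ι → Matrix n n ℝ} (h : ∀ i, FormBound r (A i) (B i)) :
    FormBound r (∑ i, A i) (∑ i, B i) := fun x => by
  simp only [sum_mulVec, dotProduct_sum, Finset.mul_sum]
  exact (Finset.abs_sum_le_sum_abs _ _).trans (Finset.sum_le_sum fun i _ => h i x)

theorem smul (h : FormBound r A B) {c : ℝ} (hc : 0 ≤ c) : FormBound r (c • A) (c • B) :=
  fun x => by
    simp only [smul_mulVec, dotProduct_smul, smul_eq_mul, abs_mul, abs_of_nonneg hc]
    linarith [mul_le_mul_of_nonneg_left (h x) hc]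

theorem of_spectrum [DecidableEq m] (hA : A.IsHermitian) (hr : ∀ ν ∈ spectrum ℝ A, |ν| ≤ r) :
    FormBound r A 1 := fun x => by
  have hneg := dotProduct_mulVec_le_of_spectrum_le hA.neg (r := r) (fun ν hν => by
    rw [← spectrum.neg_eq] at hν
    exact (le_abs_self ν).trans (by simpa using hr (-ν) hν)) x
  rw [neg_mulVec, dotProduct_neg] at hneg
  rw [one_mulVec]
  exact abs_le.mpr ⟨by linarith,
    dotProduct_mulVec_le_of_spectrum_le hA (fun ν hν => (le_abs_self ν).trans (hr ν hν)) x⟩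

theorem abs_le_of_mem_spectrum [DecidableEq m] (h : FormBound r A 1) {μ : ℝ}
    (hμ : μ ∈ spectrum ℝ A) : |μ| ≤ r := by
  rw [← spectrum_toLin', ← Module.End.hasEigenvalue_iff_mem_spectrum] at hμ
  obtain ⟨x, hx⟩ := hμ.exists_hasEigenvector
  have hxx : 0 < x ⬝ᵥ x := by simpa using dotProduct_star_self_pos_iff.2 hx.2
  have hbound := h x
  rw [one_mulVec, ← toLin'_apply, hx.apply_eq_smul, dotProduct_smul, smul_eq_mul, abs_mul,
    abs_of_pos hxx] at hbound
  exact le_of_mul_le_mul_right hbound hxx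

end FormBound

theorem sum_prod_kronecker [NonUnitalNonAssocSemiring α] {κ l p q : Type*} [Fintype ι]
    [Fintype κ] (A : ι → Matrix l m α) (B : κ → Matrix p q α) :
    ∑ x : ι × κ, A x.1 ⊗ₖ B x.2 = (∑ i, A i) ⊗ₖ (∑ j, B j) := by
  ext ⟨i₁, i₂⟩ ⟨j₁, j₂⟩
  simp only [sum_apply, kronecker_apply, Finset.sum_mul_sum, Fintype.sum_prod_type]

theorem diagonal_comp_mul_submatrix_one [Fintype m] [Fintype n] [NonAssocSemiring α]
    [DecidableEq m] [DecidableEq n] (σ : m → n) (f : n → α) :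
    diagonal (f ∘ σ) * (1 : Matrix n n α).submatrix σ id
      = (1 : Matrix n n α).submatrix σ id * diagonal f := by
  ext q a
  by_cases h : σ q = a <;> simp [h, one_apply]

end Matrix

theorem Set.Finite.exists_abs_le_of_mul_abs_lt {S : Set ℝ} (hS : S.Finite) {t b : ℝ}
    (hb : 0 < b) (h : ∀ ν ∈ S, t * |ν| < b) : ∃ r, t * r < b ∧ ∀ ν ∈ S, |ν| ≤ r := by
  rcases S.eq_empty_or_nonempty with rfl | hne
  · exact ⟨0, by simpa using hb, by simp⟩
  · obtain ⟨ν₀, hν₀, hmax⟩ := Set.exists_max_image S abs hS hne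
    exact ⟨|ν₀|, h ν₀ hν₀, hmax⟩

section Kron3

variable {α β γ : Type*}

lemma kron3_apply (A : Matrix α α ℝ) (B : Matrix β β ℝ) (C : Matrix γ γ ℝ) (x y : α × β × γ) :
    kron3 A B C x y = A x.1 y.1 * B x.2.1 y.2.1 * C x.2.2 y.2.2 := rfl

lemma kron3_eq_kronecker (A : Matrix α α ℝ) (B : Matrix β β ℝ) (C : Matrix γ γ ℝ) :
    kron3 A B C = A ⊗ₖ (B ⊗ₖ C) := by
  ext x y
  exact mul_assoc _ _ _

lemma kron3_transpose (A : Matrix α α ℝ) (B : Matrix β β ℝ) (C : Matrix γ γ ℝ) :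
    (kron3 A B C)ᵀ = kron3 Aᵀ Bᵀ Cᵀ := rfl

lemma kron3_smul (a b c : ℝ) (A : Matrix α α ℝ) (B : Matrix β β ℝ) (C : Matrix γ γ ℝ) :
    kron3 (a • A) (b • B) (c • C) = (a * b * c) • kron3 A B C := by
  ext x y
  simp only [kron3_apply, Matrix.smul_apply, smul_eq_mul]
  ring

lemma kron3_one [DecidableEq α] [DecidableEq β] [DecidableEq γ] :
    kron3 (1 : Matrix α α ℝ) (1 : Matrix β β ℝ) (1 : Matrix γ γ ℝ) = 1 := by
  rw [kron3_eq_kronecker, one_kronecker_one, one_kronecker_one]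

end Kron3

section OneDim

variable {p : ℕ}

def cornerSel (k : Fin p) : Matrix (Fin 2) (Fin (p+1)) ℝ :=
  (1 : Matrix (Fin (p+1)) (Fin (p+1)) ℝ).submatrix (cornerIdx k) id

lemma cornerSel_zero_apply (k : Fin p) (a : Fin (p+1)) :
    cornerSel k 0 a = if k.castSucc = a then 1 else 0 := rfl

lemma cornerSel_one_apply (k : Fin p) (a : Fin (p+1)) :
    cornerSel k 1 a = if k.succ = a then 1 else 0 := rfl

lemma sum_ite_castSucc_eq (a : Fin (p+1)) :
    ∑ k : Fin p, (if k.castSucc = a then (1:ℝ) else 0) = if a = Fin.last p then 0 else 1 := by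
  induction a using Fin.lastCases <;> simp [Fin.castSucc_ne_last, eq_comm]

lemma sum_ite_succ_eq (a : Fin (p+1)) :
    ∑ k : Fin p, (if k.succ = a then (1:ℝ) else 0) = if a = 0 then 0 else 1 := by
  induction a using Fin.cases <;> simp [Fin.succ_ne_zero, eq_comm]

lemma sum_cornerSel_transpose_mul_cornerSel (hp : 0 < p) :
    ∑ k : Fin p, (cornerSel k)ᵀ * cornerSel k = (2 : ℝ) • Itl p := by
  ext a b
  simp only [Matrix.sum_apply, mul_apply, Fin.sum_univ_two, transpose_apply,
    cornerSel_zero_apply, cornerSel_one_apply, ite_zero_mul_ite_zero, mul_one, Matrix.smul_apply,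
    Itl]
  obtain rfl | hab := eq_or_ne a b
  · simp only [and_self, Finset.sum_add_distrib, sum_ite_castSucc_eq, sum_ite_succ_eq,
      diagonal_apply_eq]
    by_cases ha0 : a = 0
    · simp [ha0, hp.ne']
    · by_cases hal : a = Fin.last p
      · simp [hal, hp.ne']
      · norm_num [ha0, hal]
  · rw [diagonal_apply_ne _ hab, smul_zero]
    refine Finset.sum_eq_zero fun k _ => ?_
    have hne : ∀ c : Fin (p+1), ¬(c = a ∧ c = b) := fun c h => hab (h.1.symm.trans h.2)
    simp [hne]

lemma Wmat_apply (k : Fin p) (a : Fin (p+1)) :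
    Wmat p k a = (if k.succ = a then 1 else 0) - (if k.castSucc = a then 1 else 0) := by
  have hne : k.castSucc ≠ k.succ := Fin.castSucc_lt_succ.ne
  rw [Wmat, of_apply]
  by_cases h1 : a = k.castSucc <;> by_cases h2 : a = k.succ <;> simp_all [eq_comm]

lemma sum_cornerSel_conj_What : ∑ k : Fin p, (cornerSel k)ᵀ * What * cornerSel k = Amat p := by
  ext a b
  simp only [Matrix.sum_apply, Amat, mul_apply, transpose_apply, Wmat_apply]
  refine Finset.sum_congr rfl fun k _ => ?_
  simp only [Fin.sum_univ_two, cornerSel_zero_apply, cornerSel_one_apply, What, of_apply,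
    cons_val_zero, cons_val_one]
  ring

lemma Itl_apply_pos (a : Fin (p+1)) : 0 < Itl p a a := by
  rw [Itl, diagonal_apply_eq]
  split_ifs <;> norm_num

end OneDim

section Cells

variable {nx ny nz : ℕ}

def corner (c : Fin nz × Fin ny × Fin nx) (q : Fin 2 × Fin 2 × Fin 2) : Node nx ny nz :=
  (cornerIdx c.1 q.1, cornerIdx c.2.1 q.2.1, cornerIdx c.2.2 q.2.2)

def cellSel (c : Fin nz × Fin ny × Fin nx) : Matrix (Fin 2 × Fin 2 × Fin 2) (Node nx ny nz) ℝ :=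
  cornerSel c.1 ⊗ₖ (cornerSel c.2.1 ⊗ₖ cornerSel c.2.2)

lemma cellSel_eq_submatrix_one (c : Fin nz × Fin ny × Fin nx) :
    cellSel c = (1 : Matrix (Node nx ny nz) (Node nx ny nz) ℝ).submatrix (corner c) id := by
  ext ⟨κ, γ, α⟩ ⟨a, b, d⟩
  simp only [cellSel, cornerSel, corner, kronecker_apply, submatrix_apply, id_eq, one_apply,
    Prod.ext_iff]
  split_ifs <;> simp_all

lemma sum_cellSel_conj_kron3 (A B C : Matrix (Fin 2) (Fin 2) ℝ) :
    ∑ c : Fin nz × Fin ny × Fin nx, (cellSel c)ᵀ * kron3 A B C * cellSel c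
      = kron3 (∑ k, (cornerSel k)ᵀ * A * cornerSel k) (∑ k, (cornerSel k)ᵀ * B * cornerSel k)
          (∑ k, (cornerSel k)ᵀ * C * cornerSel k) := by
  simp only [kron3_eq_kronecker, cellSel, ← kroneckerMap_transpose, ← mul_kronecker_mul]
  rw [← sum_prod_kronecker, ← sum_prod_kronecker]

lemma sum_cellSel_transpose_mul_cellSel (hnx : 0 < nx) (hny : 0 < ny) (hnz : 0 < nz) :
    ∑ c : Fin nz × Fin ny × Fin nx, (cellSel c)ᵀ * cellSel c
      = (8 : ℝ) • kron3 (Itl nz) (Itl ny) (Itl nx) := by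
  have h := sum_cellSel_conj_kron3 (nx := nx) (ny := ny) (nz := nz) 1 1 1
  simp only [kron3_one, Matrix.mul_one] at h
  rw [h, sum_cornerSel_transpose_mul_cornerSel hnx, sum_cornerSel_transpose_mul_cornerSel hny,
    sum_cornerSel_transpose_mul_cornerSel hnz, kron3_smul]
  norm_num

lemma cellSel_conj_diagonal_restr (c : Fin nz × Fin ny × Fin nx) (f : Node nx ny nz → ℝ) :
    (cellSel c)ᵀ * diagonal (restr c f) * cellSel c = (cellSel c)ᵀ * cellSel c * diagonal f := by
  rw [Matrix.mul_assoc, Matrix.mul_assoc, cellSel_eq_submatrix_one]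
  exact congrArg _ (diagonal_comp_mul_submatrix_one (corner c) f)

lemma Vsec_eq_smul_kron3 (Δx Δy Δz : ℝ) :
    Vsec nx ny nz Δx Δy Δz = (Δx * Δy * Δz) • kron3 (Itl nz) (Itl ny) (Itl nx) := by
  simp only [Vsec, Itl, kron3_eq_kronecker, diagonal_kronecker_diagonal, ← diagonal_smul,
    diagonal_apply_eq]
  congr 1
  funext x
  simp only [Pi.smul_apply, smul_eq_mul]
  ring

lemma Vsec_eq_sum_cellSel_conj (hnx : 0 < nx) (hny : 0 < ny) (hnz : 0 < nz) (Δx Δy Δz : ℝ) :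
    Vsec nx ny nz Δx Δy Δz = ∑ c, (cellSel c)ᵀ * Vcell Δx Δy Δz * cellSel c := by
  simp only [Vcell, Matrix.mul_smul, Matrix.smul_mul, Matrix.mul_one, ← Finset.smul_sum,
    sum_cellSel_transpose_mul_cellSel hnx hny hnz, smul_smul, Vsec_eq_smul_kron3]
  ring_nf

lemma Hmat_eq_sum_cellSel_conj (hnx : 0 < nx) (hny : 0 < ny) (hnz : 0 < nz)
    (ℏ m Δx Δy Δz : ℝ) (U : Node nx ny nz → ℝ) :
    Hmat nx ny nz ℏ m Δx Δy Δz U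
      = ∑ c, (cellSel c)ᵀ * Hcell nx ny nz ℏ m Δx Δy Δz U c * cellSel c := by
  simp only [Hcell, Matrix.mul_add, Matrix.add_mul, Matrix.mul_smul, Matrix.smul_mul,
    Finset.sum_add_distrib, ← Finset.smul_sum, cellSel_conj_diagonal_restr, ← Finset.sum_mul,
    sum_cellSel_conj_kron3, Matrix.mul_one, sum_cornerSel_transpose_mul_cornerSel hnx,
    sum_cornerSel_transpose_mul_cornerSel hny, sum_cornerSel_transpose_mul_cornerSel hnz,
    sum_cornerSel_conj_What, sum_cellSel_transpose_mul_cellSel hnx hny hnz]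
  simp only [Hmat, Vsec_eq_smul_kron3, kron3_eq_kronecker, smul_kronecker, kronecker_smul,
    Matrix.smul_mul, smul_smul]
  module

lemma Vsec_apply_pos {Δx Δy Δz : ℝ} (hΔx : 0 < Δx) (hΔy : 0 < Δy) (hΔz : 0 < Δz)
    (p : Node nx ny nz) : 0 < Vsec nx ny nz Δx Δy Δz p p := by
  have := Itl_apply_pos (p := nz) p.1
  have := Itl_apply_pos (p := ny) p.2.1
  have := Itl_apply_pos (p := nx) p.2.2
  rw [Vsec, diagonal_apply_eq]
  positivity

lemma Sgm_eq_conj (ℏ m Δx Δy Δz : ℝ) (U : Node nx ny nz → ℝ) :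
    Sgm nx ny nz ℏ m Δx Δy Δz U
      = (Dmat nx ny nz Δx Δy Δz)ᵀ * ((1/ℏ) • Hmat nx ny nz ℏ m Δx Δy Δz U)
          * Dmat nx ny nz Δx Δy Δz := by
  rw [Sgm, Dmat, diagonal_transpose, Matrix.mul_smul, Matrix.smul_mul]

lemma Dmat_conj_Vsec {Δx Δy Δz : ℝ} (hΔx : 0 < Δx) (hΔy : 0 < Δy) (hΔz : 0 < Δz) :
    (Dmat nx ny nz Δx Δy Δz)ᵀ * Vsec nx ny nz Δx Δy Δz * Dmat nx ny nz Δx Δy Δz = 1 := by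
  rw [Dmat, diagonal_transpose]
  conv_lhs => enter [1, 2]; rw [Vsec]
  rw [diagonal_mul_diagonal, diagonal_mul_diagonal, ← diagonal_one]
  congr 1
  funext p
  have hV := Vsec_apply_pos hΔx hΔy hΔz p
  rw [Vsec, diagonal_apply_eq] at hV ⊢
  have hs := Real.sqrt_pos.2 hV
  field_simp
  rw [Real.sq_sqrt hV.le]

lemma What_transpose : Whatᵀ = What := by
  ext i j
  fin_cases i <;> fin_cases j <;> rfl

lemma Hcell_isHermitian (ℏ m Δx Δy Δz : ℝ) (U : Node nx ny nz → ℝ)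
    (c : Fin nz × Fin ny × Fin nx) : (Hcell nx ny nz ℏ m Δx Δy Δz U c).IsHermitian := by
  rw [IsHermitian, conjTranspose_eq_transpose_of_trivial]
  simp only [Hcell, transpose_add, transpose_smul, kron3_transpose, transpose_one, What_transpose,
    diagonal_transpose]

end Cells

theorem fdtdq_min_cell_CFL_le_region_CFL_general
    (nx ny nz : ℕ) (hnx : 0 < nx) (hny : 0 < ny) (hnz : 0 < nz)
    (ℏ m Δx Δy Δz : ℝ)
    (hΔx : 0 < Δx) (hΔy : 0 < Δy) (hΔz : 0 < Δz)
    (Δt : ℝ) (hΔt : 0 < Δt)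
    (U : Node nx ny nz → ℝ)
    (hcell : ∀ c : Fin nz × Fin ny × Fin nx,
      ∀ ν ∈ spectrum ℝ ((8/(ℏ*Δx*Δy*Δz)) • Hcell nx ny nz ℏ m Δx Δy Δz U c),
        Δt * |ν| < 2) :
    ∀ μ ∈ spectrum ℝ (Sgm nx ny nz ℏ m Δx Δy Δz U), Δt * |μ| < 2 := by
  intro μ hμ
  obtain ⟨r, hΔtr, hr⟩ := (Set.finite_iUnion fun c => Matrix.finite_real_spectrum
    (A := (8/(ℏ*Δx*Δy*Δz)) • Hcell nx ny nz ℏ m Δx Δy Δz U c)).exists_abs_le_of_mul_abs_lt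
      (t := Δt) two_pos fun ν hν => by
        obtain ⟨c, hc⟩ := Set.mem_iUnion.1 hν
        exact hcell c ν hc
  have hcell_form (c : Fin nz × Fin ny × Fin nx) :
      FormBound r ((1/ℏ) • Hcell nx ny nz ℏ m Δx Δy Δz U c) (Vcell Δx Δy Δz) := by
    have h := (FormBound.of_spectrum ((Hcell_isHermitian ℏ m Δx Δy Δz U c).smul
      (IsSelfAdjoint.all _)) fun ν hν => hr ν (Set.mem_iUnion.2 ⟨c, hν⟩)).smul
      (c := Δx*Δy*Δz/8) (by positivity)
    rwa [smul_smul, show Δx*Δy*Δz/8 * (8/(ℏ*Δx*Δy*Δz)) = 1/ℏ by field_simp] at h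
  have hregion :
      FormBound r ((1/ℏ) • Hmat nx ny nz ℏ m Δx Δy Δz U) (Vsec nx ny nz Δx Δy Δz) := by
    rw [Hmat_eq_sum_cellSel_conj hnx hny hnz, Vsec_eq_sum_cellSel_conj hnx hny hnz,
      Finset.smul_sum]
    exact FormBound.sum fun c => by
      simpa only [Matrix.mul_smul, Matrix.smul_mul] using (hcell_form c).conj (cellSel c)
  have hSgm : FormBound r (Sgm nx ny nz ℏ m Δx Δy Δz U) 1 := by
    rw [Sgm_eq_conj, ← Dmat_conj_Vsec hΔx hΔy hΔz]
    exact hregion.conj _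
  calc Δt * |μ| ≤ Δt * r := mul_le_mul_of_nonneg_left (hSgm.abs_le_of_mem_spectrum hμ) hΔt.le
    _ < 2 := hΔtr

/-- Appendix B of the paper: if the time step satisfies the single-cell generalized
CFL condition for every primary cell, then it satisfies the generalized CFL condition
for the whole region; i.e. the minimum single-cell generalized CFL limit is at most
the region's generalized CFL limit. -/
theorem fdtdq_min_cell_CFL_le_region_CFL
    (nx ny nz : ℕ) (hnx : 0 < nx) (hny : 0 < ny) (hnz : 0 < nz)
    (ℏ m Δx Δy Δz : ℝ) (hℏ : 0 < ℏ) (hm : 0 < m)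
    (hΔx : 0 < Δx) (hΔy : 0 < Δy) (hΔz : 0 < Δz)
    (Δt : ℝ) (hΔt : 0 < Δt)
    (U : Node nx ny nz → ℝ)
    (hcell : ∀ c : Fin nz × Fin ny × Fin nx,
      ∀ ν ∈ spectrum ℝ ((8/(ℏ*Δx*Δy*Δz)) • Hcell nx ny nz ℏ m Δx Δy Δz U c),
        Δt * |ν| < 2) :
    ∀ μ ∈ spectrum ℝ (Sgm nx ny nz ℏ m Δx Δy Δz U), Δt * |μ| < 2 :=
  fdtdq_min_cell_CFL_le_region_CFL_general nx ny nz hnx hny hnz ℏ m Δx Δy Δz hΔx hΔy hΔz Δt hΔt U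
    hcell

end
end

section
/- (Appendix B, Corollary: the region's conventional CFL limit is at most every single-cell generalized CFL limit.) For the concrete 3-D FDTD-Q region, set Σc := (8/(ℏ*Δx*Δy*Δz)) • Hc for each cell c. Then for every cell c = (k,j,i) ∈ Fin nz × Fin ny × Fin nx and every eigenvalue ν ∈ spectrum ℝ Σc, |ν| ≤ (2*ℏ/m) * (1/Δx^2 + 1/Δy^2 + 1/Δz^2) + (1/ℏ) * (max over p ∈ 𝒩 of |U p|). Equivalently, Δt_CFL := 2/((2*ℏ/m)*(1/Δx^2+1/Δy^2+1/Δz^2) + (max over p ∈ 𝒩 of |U p|)/ℏ) is at most min over cells c of 2/ρ(Σc). -/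
open Matrix Kronecker

noncomputable section

/-! The scaled cell Hamiltonian is bounded in the `ℓ∞` operator norm (maximal absolute row sum),
which is submultiplicative and therefore dominates every eigenvalue. In that norm each Kronecker
product `1 ⊗ 1 ⊗ Ŵ` has norm `‖1‖ ‖1‖ ‖Ŵ‖ = 2`, and the potential term is diagonal with entries
bounded by `max |U|`; the triangle inequality and the scaling `8/(ℏ Δx Δy Δz)` give the bound. -/

attribute [local instance] Matrix.linftyOpNormedAddCommGroup Matrix.linftyOpNormedRing
  Matrix.linftyOpNormedAlgebra Matrix.linftyOpNormedSpace

namespace Matrix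

variable {m n : Type*} [Fintype m] [Fintype n]

theorem row_sum_le_linfty_opNorm (A : Matrix m n ℝ) (i : m) : ∑ j, ‖A i j‖ ≤ ‖A‖ := by
  have h := NNReal.coe_le_coe.2
    (Finset.le_sup (f := fun i => ∑ j, ‖A i j‖₊) (Finset.mem_univ i))
  rwa [NNReal.coe_sum, ← linfty_opNorm_def] at h

theorem linfty_opNorm_le_of_row_sum_le (A : Matrix m n ℝ) {r : ℝ} (hr : 0 ≤ r)
    (h : ∀ i, ∑ j, ‖A i j‖ ≤ r) : ‖A‖ ≤ r := by
  rw [linfty_opNorm_def, ← Real.coe_toNNReal r hr, NNReal.coe_le_coe]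
  refine Finset.sup_le fun i _ => ?_
  rw [← NNReal.coe_le_coe, NNReal.coe_sum, Real.coe_toNNReal r hr]
  exact h i

end Matrix

section Kronecker

variable {α β γ : Type*}

theorem kron3_apply_s14 (A : Matrix α α ℝ) (B : Matrix β β ℝ) (C : Matrix γ γ ℝ)
    (i j : α × β × γ) : kron3 A B C i j = A i.1 j.1 * B i.2.1 j.2.1 * C i.2.2 j.2.2 := by
  simp [kron3, kroneckerMap_apply, mul_assoc]

theorem norm_kron3_le [Fintype α] [Fintype β] [Fintype γ]
    (A : Matrix α α ℝ) (B : Matrix β β ℝ) (C : Matrix γ γ ℝ) :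
    ‖kron3 A B C‖ ≤ ‖A‖ * ‖B‖ * ‖C‖ := by
  refine linfty_opNorm_le_of_row_sum_le _ (by positivity) fun i => ?_
  have row_sum : ∑ j, ‖kron3 A B C i j‖ =
      (∑ a, ‖A i.1 a‖) * (∑ b, ‖B i.2.1 b‖) * (∑ c, ‖C i.2.2 c‖) := by
    rw [Finset.sum_mul_sum, Finset.sum_mul]
    simp only [Fintype.sum_prod_type, kron3_apply_s14, norm_mul, Finset.sum_mul_sum]
  rw [row_sum]
  gcongr <;> exact row_sum_le_linfty_opNorm _ _

end Kronecker

theorem norm_What_le : ‖What‖ ≤ 2 :=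
  linfty_opNorm_le_of_row_sum_le _ zero_le_two fun i => by
    fin_cases i <;> norm_num [Fin.sum_univ_two, What]

theorem norm_restr_le {nx ny nz : ℕ} (c : Fin nz × Fin ny × Fin nx) (ψ : Node nx ny nz → ℝ) :
    ‖restr c ψ‖ ≤ Finset.univ.sup' Finset.univ_nonempty (fun p => |ψ p|) := by
  have le_sup (p : Node nx ny nz) := Finset.le_sup' (fun p => |ψ p|) (Finset.mem_univ p)
  exact (pi_norm_le_iff_of_nonneg ((abs_nonneg _).trans (le_sup 0))).2 fun q => le_sup _

theorem norm_Hcell_le (nx ny nz : ℕ) (ℏ m Δx Δy Δz : ℝ) (hm : 0 < m)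
    (hΔx : 0 < Δx) (hΔy : 0 < Δy) (hΔz : 0 < Δz) (U : Node nx ny nz → ℝ)
    (c : Fin nz × Fin ny × Fin nx) :
    ‖Hcell nx ny nz ℏ m Δx Δy Δz U c‖ ≤
      ℏ^2/(2*m) * (Δy*Δz/(4*Δx) * 2 + Δx*Δz/(4*Δy) * 2 + Δx*Δy/(4*Δz) * 2)
        + Δx*Δy*Δz/8 * Finset.univ.sup' Finset.univ_nonempty (fun p => |U p|) := by
  refine (norm_add_le _ _).trans ?_
  rw [norm_smul_of_nonneg (by positivity), norm_smul_of_nonneg (by positivity),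
    linfty_opNorm_diagonal]
  gcongr
  · refine (norm_add₃_le ..).trans ?_
    rw [norm_smul_of_nonneg (by positivity), norm_smul_of_nonneg (by positivity),
      norm_smul_of_nonneg (by positivity)]
    gcongr <;> exact (norm_kron3_le _ _ _).trans (by simpa using norm_What_le)
  · exact norm_restr_le c U

theorem fdtdq_region_CFL_le_cell_generalized_CFL_general
    (nx ny nz : ℕ)
    (ℏ m Δx Δy Δz : ℝ) (hℏ : 0 < ℏ) (hm : 0 < m)
    (hΔx : 0 < Δx) (hΔy : 0 < Δy) (hΔz : 0 < Δz)
    (U : Node nx ny nz → ℝ) :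
    ∀ c : Fin nz × Fin ny × Fin nx,
      ∀ ν ∈ spectrum ℝ ((8/(ℏ*Δx*Δy*Δz)) • Hcell nx ny nz ℏ m Δx Δy Δz U c),
        |ν| ≤ (2*ℏ/m) * (1/Δx^2 + 1/Δy^2 + 1/Δz^2)
          + (1/ℏ) * (Finset.univ.sup' Finset.univ_nonempty
              (fun p : Node nx ny nz => |U p|)) := by
  intro c ν hν
  calc |ν| ≤ ‖(8/(ℏ*Δx*Δy*Δz)) • Hcell nx ny nz ℏ m Δx Δy Δz U c‖ :=
        spectrum.norm_le_norm_of_mem hν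
    _ = 8/(ℏ*Δx*Δy*Δz) * ‖Hcell nx ny nz ℏ m Δx Δy Δz U c‖ :=
        norm_smul_of_nonneg (by positivity) _
    _ ≤ 8/(ℏ*Δx*Δy*Δz) * (ℏ^2/(2*m) * (Δy*Δz/(4*Δx) * 2 + Δx*Δz/(4*Δy) * 2
          + Δx*Δy/(4*Δz) * 2) + Δx*Δy*Δz/8 * Finset.univ.sup' Finset.univ_nonempty
            (fun p => |U p|)) := by
        gcongr
        exact norm_Hcell_le nx ny nz ℏ m Δx Δy Δz hm hΔx hΔy hΔz U c
    _ = _ := by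
        field_simp
        ring

/-- Appendix B of the paper (corollary): every eigenvalue of every scaled single-cell
Hamiltonian `Σc` is bounded in absolute value by the reciprocal of the region's
conventional CFL limit (times 2); i.e. the region's conventional CFL limit is at most
every single-cell generalized CFL limit. -/
theorem fdtdq_region_CFL_le_cell_generalized_CFL
    (nx ny nz : ℕ) (hnx : 0 < nx) (hny : 0 < ny) (hnz : 0 < nz)
    (ℏ m Δx Δy Δz : ℝ) (hℏ : 0 < ℏ) (hm : 0 < m)
    (hΔx : 0 < Δx) (hΔy : 0 < Δy) (hΔz : 0 < Δz)
    (U : Node nx ny nz → ℝ) :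
    ∀ c : Fin nz × Fin ny × Fin nx,
      ∀ ν ∈ spectrum ℝ ((8/(ℏ*Δx*Δy*Δz)) • Hcell nx ny nz ℏ m Δx Δy Δz U c),
        |ν| ≤ (2*ℏ/m) * (1/Δx^2 + 1/Δy^2 + 1/Δz^2)
          + (1/ℏ) * (Finset.univ.sup' Finset.univ_nonempty
              (fun p : Node nx ny nz => |U p|)) :=
  fdtdq_region_CFL_le_cell_generalized_CFL_general nx ny nz ℏ m Δx Δy Δz hℏ hm hΔx hΔy hΔz U

end
end
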